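/- Work in the polynomial ring ℤ[ψ1, θ1, λ1, λ2]. Let J₀ ⊂ ℤ[ψ1, λ1, λ2] be the ideal generated by λ2 − ψ1(λ1−ψ1), λ1(24λ1² − 48λ2) and 20λ1²λ2. Let F₁ : ℤ[ψ1,θ1,λ1,λ2] → ℤ[ψ1,λ1,λ2]/J₀ be the ring homomorphism sending θ1 ↦ 0 and each other variable to the class of the like-named variable, and let F₂ : ℤ[ψ1,θ1,λ1,λ2] → ℤ[ψ1,λ1] be the ring homomorphism sending ψ1 ↦ ψ1, λ1 ↦ λ1, θ1 ↦ −λ1, λ2 ↦ ψ1(λ1−ψ1). Then ker F₁ ∩ ker F₂ equals the ideal generated by λ2 − ψ1(λ1−ψ1), (λ1+θ1)(24λ1²−48λ2), 20(λ1+θ1)λ1λ2, and θ1(λ1+θ1). -/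

import Mathlib

/-!
Modulo `λ2 − ψ1(λ1−ψ1)` and `θ1(λ1+θ1)`, both of which lie in `ker F₁ ∩ ker F₂`, every
polynomial is congruent to `(λ1+θ1)·r + s` with `r, s ∈ ℤ[ψ1,λ1]`: eliminate `λ2`, and write
`θ1 = (λ1+θ1) − λ1`. Then `F₂` sends it to `s`, so `s = 0`, while `F₁` sends it to `λ1·r`.
Substituting `λ2 = ψ1(λ1−ψ1)` turns `J₀` into `λ1·J₁`, so cancelling `λ1` gives `r ∈ J₁`; and
`(λ1+θ1)·J₁` lies in the ideal of the theorem modulo its first generator.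
-/

open MvPolynomial

/-- The ideal `J₀ ⊂ ℤ[ψ1, λ1, λ2]` generated by `λ2 − ψ1(λ1−ψ1)`,
`λ1(24λ1² − 48λ2)` and `20λ1²λ2`.  Variables: `ψ1 = X 0`, `λ1 = X 1`, `λ2 = X 2`. -/
noncomputable def J₀ : Ideal (MvPolynomial (Fin 3) ℤ) :=
  Ideal.span {X 2 - X 0 * (X 1 - X 0), X 1 * (24 * X 1 ^ 2 - 48 * X 2), 20 * X 1 ^ 2 * X 2}

/-- `F₁ : ℤ[ψ1,θ1,λ1,λ2] → ℤ[ψ1,λ1,λ2]/J₀`, sending `θ1 ↦ 0` and each other variable to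
the class of the like-named variable.  Source variables: `ψ1 = X 0`, `θ1 = X 1`,
`λ1 = X 2`, `λ2 = X 3`. -/
noncomputable def F₁ : MvPolynomial (Fin 4) ℤ →+* MvPolynomial (Fin 3) ℤ ⧸ J₀ :=
  (Ideal.Quotient.mk J₀).comp
    ((aeval ![X 0, 0, X 1, X 2] : MvPolynomial (Fin 4) ℤ →ₐ[ℤ] MvPolynomial (Fin 3) ℤ) :
      MvPolynomial (Fin 4) ℤ →+* MvPolynomial (Fin 3) ℤ)

/-- `F₂ : ℤ[ψ1,θ1,λ1,λ2] → ℤ[ψ1,λ1]`, sending `ψ1 ↦ ψ1`, `λ1 ↦ λ1`, `θ1 ↦ −λ1`,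
`λ2 ↦ ψ1(λ1−ψ1)`.  Target variables: `ψ1 = X 0`, `λ1 = X 1`. -/
noncomputable def F₂ : MvPolynomial (Fin 4) ℤ →+* MvPolynomial (Fin 2) ℤ :=
  ((aeval ![X 0, -X 1, X 1, X 0 * (X 1 - X 0)] :
      MvPolynomial (Fin 4) ℤ →ₐ[ℤ] MvPolynomial (Fin 2) ℤ) :
    MvPolynomial (Fin 4) ℤ →+* MvPolynomial (Fin 2) ℤ)

theorem Ideal.mem_of_mul_mem_span_singleton_mul {R : Type*} [CommSemiring R] {a r : R}
    {I : Ideal R} (ha : IsLeftRegular a) (h : a * r ∈ Ideal.span {a} * I) : r ∈ I := by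
  obtain ⟨z, hz, hzr⟩ := Ideal.mem_span_singleton_mul.mp h
  exact ha hzr ▸ hz

-- `ι₃`, `ι₄` include `ℤ[ψ1,λ1]` into `ℤ[ψ1,λ1,λ2]` and `ℤ[ψ1,θ1,λ1,λ2]`;
-- `σ` substitutes `λ2 ↦ ψ1(λ1−ψ1)`, a retraction of `ι₃`.
noncomputable def ι₄ : MvPolynomial (Fin 2) ℤ →ₐ[ℤ] MvPolynomial (Fin 4) ℤ := aeval ![X 0, X 2]

noncomputable def ι₃ : MvPolynomial (Fin 2) ℤ →ₐ[ℤ] MvPolynomial (Fin 3) ℤ := aeval ![X 0, X 1]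

noncomputable def σ : MvPolynomial (Fin 3) ℤ →ₐ[ℤ] MvPolynomial (Fin 2) ℤ :=
  aeval ![X 0, X 1, X 0 * (X 1 - X 0)]

noncomputable def I₄ : Ideal (MvPolynomial (Fin 4) ℤ) :=
  Ideal.span {X 3 - X 0 * (X 2 - X 0), (X 2 + X 1) * (24 * X 2 ^ 2 - 48 * X 3),
    20 * (X 2 + X 1) * X 2 * X 3, X 1 * (X 2 + X 1)}

noncomputable def relIdeal : Ideal (MvPolynomial (Fin 4) ℤ) :=
  Ideal.span {X 3 - X 0 * (X 2 - X 0), X 1 * (X 2 + X 1)}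

noncomputable def J₁ : Ideal (MvPolynomial (Fin 2) ℤ) :=
  Ideal.span {24 * X 1 ^ 2 - 48 * (X 0 * (X 1 - X 0)), 20 * X 1 * (X 0 * (X 1 - X 0))}

theorem mem_ker_F₁_iff {p : MvPolynomial (Fin 4) ℤ} :
    p ∈ RingHom.ker F₁ ↔ aeval ![X 0, 0, X 1, X 2] p ∈ J₀ :=
  RingHom.mem_ker.trans Ideal.Quotient.eq_zero_iff_mem

theorem F₂_ι₄ (s : MvPolynomial (Fin 2) ℤ) : F₂ (ι₄ s) = s := by
  have : (aeval ![X 0, -X 1, X 1, X 0 * (X 1 - X 0)]).comp ι₄ = AlgHom.id ℤ _ := by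
    ext i; fin_cases i <;> simp [ι₄]
  exact congr($this s)

theorem aeval_ι₄ (s : MvPolynomial (Fin 2) ℤ) : aeval ![X 0, 0, X 1, X 2] (ι₄ s) = ι₃ s := by
  have : (aeval ![X 0, 0, X 1, X 2]).comp ι₄ = ι₃ := by
    ext i; fin_cases i <;> simp [ι₄, ι₃]
  exact congr($this s)

theorem σ_ι₃ (s : MvPolynomial (Fin 2) ℤ) : σ (ι₃ s) = s := by
  have : σ.comp ι₃ = AlgHom.id ℤ _ := by
    ext i; fin_cases i <;> simp [ι₃, σ]
  exact congr($this s)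

theorem F₂_mul_ι₄_add_ι₄ (r s : MvPolynomial (Fin 2) ℤ) :
    F₂ ((X 2 + X 1) * ι₄ r + ι₄ s) = s := by
  simp only [map_add, map_mul, F₂_ι₄]
  simp [F₂]

theorem aeval_mul_ι₄ (r : MvPolynomial (Fin 2) ℤ) :
    aeval ![X 0, 0, X 1, X 2] ((X 2 + X 1) * ι₄ r) = X 1 * ι₃ r := by
  rw [map_mul, aeval_ι₄]
  simp

theorem I₄_le_ker_inf_ker : I₄ ≤ RingHom.ker F₁ ⊓ RingHom.ker F₂ := by
  have h₁ : (X 2 - X 0 * (X 1 - X 0) : MvPolynomial (Fin 3) ℤ) ∈ J₀ := Ideal.subset_span (by simp)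
  have h₂ : (X 1 * (24 * X 1 ^ 2 - 48 * X 2) : MvPolynomial (Fin 3) ℤ) ∈ J₀ :=
    Ideal.subset_span (by simp)
  have h₃ : (20 * X 1 ^ 2 * X 2 : MvPolynomial (Fin 3) ℤ) ∈ J₀ := Ideal.subset_span (by simp)
  simp only [I₄, Ideal.span_le, Set.insert_subset_iff, Set.singleton_subset_iff, SetLike.mem_coe,
    Ideal.mem_inf, mem_ker_F₁_iff, RingHom.mem_ker (f := F₂)]
  refine ⟨⟨?_, by simp [F₂]⟩, ⟨?_, by simp [F₂]⟩, ⟨?_, by simp [F₂]⟩, ⟨by simp, by simp [F₂]⟩⟩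
  · convert h₁ using 1; simp
  · convert h₂ using 1; simp [map_ofNat]
  · convert h₃ using 1; simp [map_ofNat]; ring

theorem relIdeal_le_I₄ : relIdeal ≤ I₄ :=
  Ideal.span_mono (by simp [Set.insert_subset_iff])

theorem relIdeal_le_ker_inf_ker : relIdeal ≤ RingHom.ker F₁ ⊓ RingHom.ker F₂ :=
  relIdeal_le_I₄.trans I₄_le_ker_inf_ker

theorem exists_sub_mem_relIdeal (p : MvPolynomial (Fin 4) ℤ) :
    ∃ r s, p - ((X 2 + X 1) * ι₄ r + ι₄ s) ∈ relIdeal := by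
  have hrel : X 3 - X 0 * (X 2 - X 0) ∈ relIdeal := Ideal.subset_span (by simp)
  have hθ : X 1 * (X 2 + X 1) ∈ relIdeal := Ideal.subset_span (by simp)
  induction p using MvPolynomial.induction_on with
  | C n => exact ⟨0, C n, by simp [ι₄]⟩
  | add p q hp hq =>
    obtain ⟨r, s, hrs⟩ := hp
    obtain ⟨r', s', hrs'⟩ := hq
    exact ⟨r + r', s + s', by convert add_mem hrs hrs' using 1; simp only [map_add]; ring⟩
  | mul_X p i hp =>
    obtain ⟨r, s, hrs⟩ := hp
    have hX := Ideal.mul_mem_right (X i) _ hrs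
    fin_cases i
    · exact ⟨r * X 0, s * X 0, by convert hX using 1; simp [ι₄]; ring⟩
    · refine ⟨s, -(X 1 * s), ?_⟩
      convert add_mem hX (Ideal.mul_mem_left _ (ι₄ r) hθ) using 1
      simp [ι₄]; ring
    · exact ⟨r * X 1, s * X 1, by convert hX using 1; simp [ι₄]; ring⟩
    · refine ⟨r * (X 0 * (X 1 - X 0)), s * (X 0 * (X 1 - X 0)), ?_⟩
      convert add_mem hX (Ideal.mul_mem_left _ ((X 2 + X 1) * ι₄ r + ι₄ s) hrel) using 1
      simp [ι₄]; ring

theorem map_σ_J₀_le : J₀.map σ ≤ Ideal.span {X 1} * J₁ := by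
  have hJ₁ : ∀ {g}, g ∈ ({24 * X 1 ^ 2 - 48 * (X 0 * (X 1 - X 0)),
      20 * X 1 * (X 0 * (X 1 - X 0))} : Set (MvPolynomial (Fin 2) ℤ)) →
      X 1 * g ∈ Ideal.span {X 1} * J₁ :=
    fun hg => Ideal.mul_mem_mul (Ideal.mem_span_singleton_self _) (Ideal.subset_span hg)
  simp only [J₀, Ideal.map_span, Ideal.span_le, Set.image_insert_eq, Set.image_singleton,
    Set.insert_subset_iff, Set.singleton_subset_iff, SetLike.mem_coe]
  refine ⟨by simp [σ], ?_, ?_⟩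
  · convert hJ₁ (Set.mem_insert _ _) using 1; simp [σ, map_ofNat]
  · convert hJ₁ (Set.mem_insert_of_mem _ rfl) using 1; simp [σ, map_ofNat]; ring

theorem mem_J₁_of_X_one_mul_mem_J₀ {r : MvPolynomial (Fin 2) ℤ} (h : X 1 * ι₃ r ∈ J₀) :
    r ∈ J₁ := by
  refine Ideal.mem_of_mul_mem_span_singleton_mul isRegular_X.left (map_σ_J₀_le ?_)
  have hσ : σ (X 1 * ι₃ r) = X 1 * r := by simp only [map_mul, σ_ι₃]; simp [σ]
  exact hσ ▸ Ideal.mem_map_of_mem σ h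

theorem mul_ι₄_mem_I₄ {r : MvPolynomial (Fin 2) ℤ} (hr : r ∈ J₁) : (X 2 + X 1) * ι₄ r ∈ I₄ := by
  obtain ⟨a, b, rfl⟩ := Ideal.mem_span_pair.mp hr
  have hrel : X 3 - X 0 * (X 2 - X 0) ∈ I₄ := Ideal.subset_span (by simp)
  have h₂ : (X 2 + X 1) * (24 * X 2 ^ 2 - 48 * X 3) ∈ I₄ := Ideal.subset_span (by simp)
  have h₃ : 20 * (X 2 + X 1) * X 2 * X 3 ∈ I₄ := Ideal.subset_span (by simp)
  convert add_mem (add_mem (Ideal.mul_mem_left _ (ι₄ a) h₂) (Ideal.mul_mem_left _ (ι₄ b) h₃))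
    (Ideal.mul_mem_left _ ((X 2 + X 1) * (48 * ι₄ a - 20 * X 2 * ι₄ b)) hrel) using 1
  simp [ι₄, map_ofNat]; ring

theorem ker_inf_ker_eq_I₄ :
    RingHom.ker F₁ ⊓ RingHom.ker F₂ =
      Ideal.span {X 3 - X 0 * (X 2 - X 0),
        (X 2 + X 1) * (24 * X 2 ^ 2 - 48 * X 3),
        20 * (X 2 + X 1) * X 2 * X 3,
        X 1 * (X 2 + X 1)} := by
  refine le_antisymm (fun p hp => ?_) I₄_le_ker_inf_ker
  obtain ⟨r, s, hrs⟩ := exists_sub_mem_relIdeal p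
  have hn : (X 2 + X 1) * ι₄ r + ι₄ s ∈ RingHom.ker F₁ ⊓ RingHom.ker F₂ := by
    simpa using sub_mem hp (relIdeal_le_ker_inf_ker hrs)
  obtain ⟨h₁, h₂⟩ := Ideal.mem_inf.mp hn
  obtain rfl : s = 0 := F₂_mul_ι₄_add_ι₄ r s ▸ h₂
  rw [map_zero, add_zero] at hrs h₁
  rw [mem_ker_F₁_iff, aeval_mul_ι₄] at h₁
  have hp' := add_mem (relIdeal_le_I₄ hrs) (mul_ι₄_mem_I₄ (mem_J₁_of_X_one_mul_mem_J₀ h₁))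
  rwa [sub_add_cancel] at hp'
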